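/- arXiv:1508.01870 — 2 statements merged into one kernel-verified Lean document; each statement's English description precedes it below -/
import Mathlib

section
/- Fix ε with 0 < ε < 1/2. There is a constant C = C(ε) > 0 such that for every integer k ≥ 1 the following holds: if X, Y, Z are three independent copies of the Poisson sequence, then with probability at least 1 − ε, for every integer m with 1 ≤ m ≤ k one has ∑_{m < j ≤ k} X_j ≥ 0.99·log(k/m) − C, ∑_{m < j ≤ k} Y_j ≥ 0.99·log(k/m) − C, and ∑_{m < j ≤ k} Z_j ≥ 0.99·log(k/m) − C. -/
open MeasureTheory ProbabilityTheory Finset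

/-- The probability that a Poisson random variable of parameter `lam` equals `m`. -/
noncomputable def poissonProb (lam : ℝ) (m : ℕ) : ENNReal :=
  ENNReal.ofReal (Real.exp (-lam) * lam ^ m / (m.factorial : ℝ))

open Real Filter Topology
open scoped NNReal

/-!
For one sequence, `S(m, k) = ∑_{m<j≤k} X_j` is Poisson with mean
`∑_{m<j≤k} 1/j ≥ log (k/m) - log 2`, so the Chernoff bound with `exp t = c` gives
`P(S(m, k) < c log (k/m) - C) ≤ c ^ C 2 ^ (1 - c) (m/k) ^ δ` with `δ = 1 - c + c log c > 0`.
Testing only the dyadic points `m = ⌊k / 2 ^ i⌋` costs `c log 2` in the threshold, and the union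
bound over them is a geometric series, uniformly in `k`; a large `C` makes it at most `ε / 3`.
A union bound over the three sequences finishes the proof.
-/

lemma mgf_poissonMeasure (r : ℝ≥0) (t : ℝ) : mgf id Po(ℝ, r) t = exp (r * (exp t - 1)) := by
  have hexp : ∑' n : ℕ, (r * exp t) ^ n / n.factorial = exp (r * exp t) := by
    rw [exp_eq_exp_ℝ, NormedSpace.exp_eq_tsum_div]
  rw [mgf, integral_map measurable_from_nat.aemeasurable (by fun_prop), integral_poissonMeasure]
  simp_rw [id, smul_eq_mul, mul_comm t, exp_nat_mul]
  calc ∑' n : ℕ, exp (-r) * r ^ n / n.factorial * exp t ^ n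
      = exp (-r) * ∑' n : ℕ, (r * exp t) ^ n / n.factorial := by
        rw [← tsum_mul_left]; congr with n; ring
    _ = _ := by rw [hexp, ← exp_add]; ring_nf

lemma log_add_one_sub_log_add_one_le_sum_Ioc {m k : ℕ} (hmk : m ≤ k) :
    log (k + 1) - log (m + 1) ≤ ∑ j ∈ Ioc m k, 1 / (j : ℝ) := by
  induction k, hmk using Nat.le_induction with
  | base => simp
  | succ k hmk ih =>
    have hstep : log ((k : ℝ) + 1 + 1) - log (k + 1) ≤ 1 / (k + 1) := by
      rw [← log_div (by positivity) (by positivity)]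
      calc log (((k : ℝ) + 1 + 1) / (k + 1)) ≤ ((k : ℝ) + 1 + 1) / (k + 1) - 1 :=
            log_le_sub_one_of_pos (by positivity)
        _ = 1 / (k + 1) := by field_simp; ring
    rw [sum_Ioc_succ_top (by omega)]
    push_cast
    linarith

lemma log_div_sub_log_two_le_sum_Ioc {m k : ℕ} (hm : 1 ≤ m) (hmk : m ≤ k) :
    log ((k : ℝ) / m) - log 2 ≤ ∑ j ∈ Ioc m k, 1 / (j : ℝ) := by
  have hm' : (1 : ℝ) ≤ m := by exact_mod_cast hm
  have hk' : (1 : ℝ) ≤ k := by exact_mod_cast hm.trans hmk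
  have hk : log k ≤ log ((k : ℝ) + 1) := log_le_log (by linarith) (by linarith)
  have hm2 : log ((m : ℝ) + 1) ≤ log 2 + log m := by
    rw [← log_mul (by norm_num) (by linarith)]
    exact log_le_log (by positivity) (by linarith)
  rw [log_div (by linarith) (by linarith)]
  linarith [log_add_one_sub_log_add_one_le_sum_Ioc hmk]

lemma one_sub_add_mul_log_pos {c : ℝ} (hc0 : 0 < c) (hc1 : c < 1) : 0 < 1 - c + c * log c := by
  have h := log_lt_sub_one_of_pos (inv_pos.2 hc0) (inv_ne_one.2 hc1.ne)
  rw [log_inv] at h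
  have := mul_lt_mul_of_pos_left h hc0
  rw [mul_sub, mul_inv_cancel₀ hc0.ne', mul_neg] at this
  linarith

lemma exists_le_div_two_pow_le_two_mul {m k : ℕ} (hm : 1 ≤ m) (hmk : m ≤ k) :
    ∃ i ≤ Nat.log 2 k, m ≤ k / 2 ^ i ∧ k / 2 ^ i ≤ 2 * m := by
  refine ⟨Nat.log 2 (k / m), Nat.log_mono_right (Nat.div_le_self k m), ?_, ?_⟩
  · have := Nat.pow_log_le_self 2 (Nat.div_pos hmk hm).ne'
    rw [Nat.le_div_iff_mul_le (by positivity)]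
    rw [Nat.le_div_iff_mul_le hm] at this
    linarith
  · have := Nat.lt_pow_succ_log_self one_lt_two (k / m)
    rw [Nat.div_lt_iff_lt_mul hm, pow_succ] at this
    rw [Nat.div_le_iff_le_mul_add_pred (by positivity)]
    nlinarith

section

variable {Ω : Type*}

def shortfallSet (W : ℕ → Ω → ℕ) (c C : ℝ) (m k : ℕ) : Set Ω :=
  {ω | ((∑ j ∈ Ioc m k, W j ω : ℕ) : ℝ) < c * log (k / m) - C}

lemma biUnion_shortfallSet_subset {W : ℕ → Ω → ℕ} {c : ℝ} (hc : 0 ≤ c) (C : ℝ) (k : ℕ) :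
    ⋃ m ∈ Icc 1 k, shortfallSet W c C m k ⊆
      ⋃ i ∈ range (Nat.log 2 k + 1), shortfallSet W c (C - c * log 2) (k / 2 ^ i) k := by
  intro ω hω
  simp only [Set.mem_iUnion, mem_Icc, exists_prop] at hω
  obtain ⟨m, ⟨hm, hmk⟩, hω⟩ := hω
  obtain ⟨i, hi, hmi, hi2⟩ := exists_le_div_two_pow_le_two_mul hm hmk
  refine Set.mem_biUnion (mem_range.2 (Nat.lt_succ_of_le hi)) ?_
  have hsum :
      ((∑ j ∈ Ioc (k / 2 ^ i) k, W j ω : ℕ) : ℝ) ≤ ((∑ j ∈ Ioc m k, W j ω : ℕ) : ℝ) := by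
    exact_mod_cast sum_le_sum_of_subset (Ioc_subset_Ioc_left hmi)
  have hlog : log ((k : ℝ) / m) ≤ log ((k : ℝ) / (k / 2 ^ i : ℕ)) + log 2 := by
    have hm0 : (0 : ℝ) < m := by exact_mod_cast hm
    have hmi' : (m : ℝ) ≤ (k / 2 ^ i : ℕ) := by exact_mod_cast hmi
    have hi2' : ((k / 2 ^ i : ℕ) : ℝ) ≤ 2 * m := by exact_mod_cast hi2
    have hm'0 : (0 : ℝ) < (k / 2 ^ i : ℕ) := hm0.trans_le hmi'
    have hk0 : (0 : ℝ) < k := by exact_mod_cast hm.trans hmk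
    rw [← log_mul (div_pos hk0 hm'0).ne' two_ne_zero]
    refine log_le_log (div_pos hk0 hm0) ?_
    calc (k : ℝ) / m = k / (k / 2 ^ i : ℕ) * ((k / 2 ^ i : ℕ) / m) := by
          field_simp [hm'0.ne']
      _ ≤ k / (k / 2 ^ i : ℕ) * 2 := by
          gcongr
          rw [div_le_iff₀ hm0]
          exact hi2'
  simp only [shortfallSet, Set.mem_ofPred_eq] at hω ⊢
  nlinarith

variable [MeasurableSpace Ω] {μ : Measure Ω}

lemma ofReal_one_sub_le_measure [IsProbabilityMeasure μ] {s : Set Ω} {ε : ℝ} (hε : 0 ≤ ε)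
    (h : μ sᶜ ≤ ENNReal.ofReal ε) : ENNReal.ofReal (1 - ε) ≤ μ s := by
  rw [ENNReal.ofReal_sub 1 hε, ENNReal.ofReal_one, tsub_le_iff_left]
  calc 1 = μ (sᶜ ∪ s) := by rw [Set.compl_union_self, measure_univ]
    _ ≤ μ sᶜ + μ s := measure_union_le _ _
    _ ≤ ENNReal.ofReal ε + μ s := by gcongr

lemma measure_iUnion_le_ofReal {ι : Type*} [Fintype ι] {s : ι → Set Ω} {ε : ℝ} (hε : 0 ≤ ε)
    (h : ∀ i, μ (s i) ≤ ENNReal.ofReal (ε / Fintype.card ι)) : μ (⋃ i, s i) ≤ ENNReal.ofReal ε := by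
  calc μ (⋃ i, s i) ≤ ∑ i, μ (s i) := measure_iUnion_fintype_le _ _
    _ ≤ ∑ _i : ι, ENNReal.ofReal (ε / Fintype.card ι) := sum_le_sum fun i _ => h i
    _ = ENNReal.ofReal (Fintype.card ι * (ε / Fintype.card ι)) := by
        rw [sum_const, card_univ, nsmul_eq_mul, ENNReal.ofReal_mul (by positivity),
          ENNReal.ofReal_natCast]
    _ ≤ ENNReal.ofReal ε := by
        refine ENNReal.ofReal_le_ofReal ?_
        rcases eq_or_ne (Fintype.card ι : ℝ) 0 with h0 | h0
        · simpa [h0] using hε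
        · rw [mul_div_cancel₀ _ h0]

lemma map_eq_poissonMeasure {W : Ω → ℕ} (hW : Measurable W) {r : ℝ≥0}
    (hlaw : ∀ n, μ {ω | W ω = n} = poissonProb r n) : μ.map W = Po(r) :=
  Measure.ext_of_singleton fun n => by
    rw [Measure.map_apply hW (measurableSet_singleton n), poissonMeasure_singleton]
    exact hlaw n

lemma mgf_natCast_of_poisson {W : Ω → ℕ} (hW : Measurable W) {r : ℝ≥0}
    (hlaw : ∀ n, μ {ω | W ω = n} = poissonProb r n) (t : ℝ) :
    mgf (fun ω => (W ω : ℝ)) μ t = exp (r * (exp t - 1)) := by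
  have hmeas : Measurable fun ω => (W ω : ℝ) := measurable_from_nat.comp hW
  have hmap : μ.map (fun ω => (W ω : ℝ)) = Po(ℝ, r) := by
    rw [← map_eq_poissonMeasure hW hlaw, Measure.map_map measurable_from_nat hW]; rfl
  rw [← mgf_id_map hmeas.aemeasurable, hmap, mgf_poissonMeasure]

lemma measure_sum_lt_le_of_poisson {ι : Type*} {W : ι → Ω → ℕ} (hW : ∀ i, Measurable (W i))
    (hind : iIndepFun W μ) {s : Finset ι} {r : ι → ℝ} (hr : ∀ i ∈ s, 0 ≤ r i)
    (hlaw : ∀ i ∈ s, ∀ n, μ {ω | W i ω = n} = poissonProb (r i) n) (a : ℝ) {t : ℝ}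
    (ht : t ≤ 0) :
    μ {ω | ∑ i ∈ s, (W i ω : ℝ) < a} ≤
      ENNReal.ofReal (exp (-t * a + (exp t - 1) * ∑ i ∈ s, r i)) := by
  have := hind.isProbabilityMeasure
  set S : Ω → ℝ := fun ω => ∑ i ∈ s, (W i ω : ℝ)
  have hWm : ∀ i, Measurable fun ω => (W i ω : ℝ) := fun i => measurable_from_nat.comp (hW i)
  have hint : Integrable (fun ω => exp (t * S ω)) μ := by
    refine .of_bound (by fun_prop) 1 (ae_of_all _ fun ω => ?_)
    rw [norm_of_nonneg (exp_pos _).le, exp_le_one_iff]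
    exact mul_nonpos_of_nonpos_of_nonneg ht (Finset.sum_nonneg fun i _ => Nat.cast_nonneg _)
  have hmgf : mgf S μ t = exp ((exp t - 1) * ∑ i ∈ s, r i) := by
    have hsum : S = ∑ i ∈ s, fun ω => (W i ω : ℝ) := by ext ω; simp [S]
    have hindℝ : iIndepFun (fun i ω => (W i ω : ℝ)) μ :=
      hind.comp (fun _ n => (n : ℝ)) fun _ => measurable_from_nat
    rw [hsum, hindℝ.mgf_sum hWm, Finset.mul_sum, exp_sum]
    refine Finset.prod_congr rfl fun i hi => ?_
    rw [mgf_natCast_of_poisson (r := ⟨r i, hr i hi⟩) (hW i) (hlaw i hi)]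
    exact congrArg exp (mul_comm _ _)
  calc μ {ω | S ω < a} ≤ μ {ω | S ω ≤ a} := measure_mono fun ω (h : S ω < a) => h.le
    _ = ENNReal.ofReal (μ.real {ω | S ω ≤ a}) := (ofReal_measureReal).symm
    _ ≤ ENNReal.ofReal (exp (-t * a) * mgf S μ t) :=
        ENNReal.ofReal_le_ofReal (measure_le_le_exp_mul_mgf a ht hint)
    _ = _ := by rw [hmgf, ← exp_add]

structure IsPoissonSeq (μ : Measure Ω) (W : ℕ → Ω → ℕ) : Prop where
  measurable : ∀ j, Measurable (W j)
  indep : iIndepFun (fun j : {j : ℕ // 1 ≤ j} => W j.1) μ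
  law : ∀ j, 1 ≤ j → ∀ n, μ {ω | W j ω = n} = poissonProb (1 / j) n

namespace IsPoissonSeq

variable {W : ℕ → Ω → ℕ}

lemma measure_sum_lt_le (hW : IsPoissonSeq μ W) {m : ℕ} (hm : 1 ≤ m) (k : ℕ) (a : ℝ) {t : ℝ}
    (ht : t ≤ 0) :
    μ {ω | ((∑ j ∈ Ioc m k, W j ω : ℕ) : ℝ) < a} ≤
      ENNReal.ofReal (exp (-t * a + (exp t - 1) * ∑ j ∈ Ioc m k, 1 / (j : ℝ))) := by
  have hpos : ∀ j ∈ Ioc m k, 1 ≤ j := fun j hj => hm.trans (mem_Ioc.1 hj).1.le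
  have h := measure_sum_lt_le_of_poisson (W := fun j : {j : ℕ // 1 ≤ j} => W j.1)
    (s := (Ioc m k).subtype (1 ≤ ·)) (r := fun j => 1 / (j.1 : ℝ))
    (fun j => hW.measurable j) hW.indep (fun _ _ => by positivity)
    (fun j _ => hW.law j.1 j.2) a ht
  have hW_sum : ∀ ω, ∑ j ∈ (Ioc m k).subtype (1 ≤ ·), (W j.1 ω : ℝ) =
      ((∑ j ∈ Ioc m k, W j ω : ℕ) : ℝ) := fun ω => by
    rw [Nat.cast_sum, sum_subtype_of_mem (fun j => (W j ω : ℝ)) hpos]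
  have hr_sum : ∑ j ∈ (Ioc m k).subtype (1 ≤ ·), 1 / (j.1 : ℝ) =
      ∑ j ∈ Ioc m k, 1 / (j : ℝ) :=
    sum_subtype_of_mem (fun j : ℕ => 1 / (j : ℝ)) hpos
  simpa only [hW_sum, hr_sum] using h

lemma measure_shortfallSet_le (hW : IsPoissonSeq μ W) {c : ℝ} (hc0 : 0 < c) (hc1 : c ≤ 1)
    {m k : ℕ} (hm : 1 ≤ m) (hmk : m ≤ k) (C : ℝ) :
    μ (shortfallSet W c C m k) ≤ ENNReal.ofReal
      (exp (C * log c + (1 - c) * log 2 - (1 - c + c * log c) * log ((k : ℝ) / m))) := by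
  refine (hW.measure_sum_lt_le hm k _ (log_nonpos hc0.le hc1)).trans
    (ENNReal.ofReal_le_ofReal (exp_le_exp.2 ?_))
  have := mul_le_mul_of_nonneg_left (log_div_sub_log_two_le_sum_Ioc hm hmk) (sub_nonneg.2 hc1)
  rw [exp_log hc0]
  linarith

lemma measure_shortfallSet_div_two_pow_le (hW : IsPoissonSeq μ W) {c : ℝ} (hc0 : 0 < c)
    (hc1 : c < 1) {i k : ℕ} (hik : 2 ^ i ≤ k) (C : ℝ) :
    μ (shortfallSet W c C (k / 2 ^ i) k) ≤ ENNReal.ofReal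
      (exp (C * log c + (1 - c) * log 2) * exp (-((1 - c + c * log c) * log 2)) ^ i) := by
  have hm : 1 ≤ k / 2 ^ i := (Nat.one_le_div_iff (by positivity)).2 hik
  refine (hW.measure_shortfallSet_le hc0 hc1.le hm (Nat.div_le_self k _) C).trans
    (ENNReal.ofReal_le_ofReal ?_)
  have hlog : i * log 2 ≤ log ((k : ℝ) / (k / 2 ^ i : ℕ)) := by
    have hmul : ((k / 2 ^ i : ℕ) : ℝ) * 2 ^ i ≤ k := by
      exact_mod_cast Nat.div_mul_le_self k (2 ^ i)
    have hpos : (0 : ℝ) < (k / 2 ^ i : ℕ) := by exact_mod_cast hm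
    rw [← log_pow]
    exact log_le_log (by positivity) (by rw [le_div_iff₀' hpos]; linarith)
  rw [← exp_nat_mul, ← exp_add]
  refine exp_le_exp.2 ?_
  nlinarith [one_sub_add_mul_log_pos hc0 hc1]

theorem eventually_measure_biUnion_shortfallSet_le (hW : IsPoissonSeq μ W) {c : ℝ}
    (hc0 : 0 < c) (hc1 : c < 1) {ε : ℝ} (hε : 0 < ε) :
    ∀ᶠ C in atTop, ∀ k, μ (⋃ m ∈ Icc 1 k, shortfallSet W c C m k) ≤ ENNReal.ofReal ε := by
  set q := exp (-((1 - c + c * log c) * log 2))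
  have hq1 : q < 1 := exp_lt_one_iff.2 (neg_neg_of_pos
    (mul_pos (one_sub_add_mul_log_pos hc0 hc1) (log_pos one_lt_two)))
  set A : ℝ → ℝ := fun C => exp ((C - c * log 2) * log c + (1 - c) * log 2)
  have hA : Tendsto (fun C => A C / (1 - q)) atTop (𝓝 0) := by
    have hlin : Tendsto (fun C : ℝ => (C - c * log 2) * log c + (1 - c) * log 2) atTop atBot :=
      tendsto_atBot_add_const_right _ _ ((tendsto_atTop_add_const_right _ _ tendsto_id)
        |>.atTop_mul_const_of_neg (log_neg hc0 hc1))
    simpa using (tendsto_exp_atBot.comp hlin).div_const (1 - q)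
  filter_upwards [hA.eventually (ge_mem_nhds hε)] with C hC k
  rcases k.eq_zero_or_pos with rfl | hk
  · simp
  calc μ (⋃ m ∈ Icc 1 k, shortfallSet W c C m k)
      ≤ μ (⋃ i ∈ range (Nat.log 2 k + 1), shortfallSet W c (C - c * log 2) (k / 2 ^ i) k) :=
        measure_mono (biUnion_shortfallSet_subset hc0.le C k)
    _ ≤ ∑ i ∈ range (Nat.log 2 k + 1), μ (shortfallSet W c (C - c * log 2) (k / 2 ^ i) k) :=
        measure_biUnion_finset_le _ _
    _ ≤ ∑ i ∈ range (Nat.log 2 k + 1), ENNReal.ofReal (A C * q ^ i) := by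
        refine sum_le_sum fun i hi => hW.measure_shortfallSet_div_two_pow_le hc0 hc1
          (Nat.pow_le_of_le_log hk.ne' (Nat.lt_succ_iff.1 (mem_range.1 hi))) _
    _ = ENNReal.ofReal (A C * ∑ i ∈ range (Nat.log 2 k + 1), q ^ i) := by
        rw [mul_sum, ENNReal.ofReal_sum_of_nonneg fun i _ => by positivity]
    _ ≤ ENNReal.ofReal ε := by
        refine ENNReal.ofReal_le_ofReal (le_trans ?_ hC)
        rw [← mul_one_div]
        gcongr
        have := geom_sum_Ico_le_of_lt_one (m := 0) (n := Nat.log 2 k + 1) (exp_pos _).le hq1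
        rwa [← range_eq_Ico, pow_zero] at this

end IsPoissonSeq

end

theorem three_sequences_lower_bound_general {Ω : Type*} [MeasurableSpace Ω]
    (μ : Measure Ω) [IsProbabilityMeasure μ] (X Y Z : ℕ → Ω → ℕ)
    (hmeas : ∀ j, Measurable (X j) ∧ Measurable (Y j) ∧ Measurable (Z j))
    (hindep : iIndepFun
      (fun p : Fin 3 × {j : ℕ // 1 ≤ j} => ![X, Y, Z] p.1 p.2.1) μ)
    (hpois : ∀ j : ℕ, 1 ≤ j → ∀ m : ℕ,
      μ {ω | X j ω = m} = poissonProb (1 / (j : ℝ)) m ∧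
      μ {ω | Y j ω = m} = poissonProb (1 / (j : ℝ)) m ∧
      μ {ω | Z j ω = m} = poissonProb (1 / (j : ℝ)) m)
    (ε : ℝ) (hε : 0 < ε) :
    ∃ C : ℝ, 0 < C ∧ ∀ k : ℕ, 1 ≤ k →
      ENNReal.ofReal (1 - ε) ≤
        μ {ω | ∀ m : ℕ, 1 ≤ m → m ≤ k →
          0.99 * Real.log ((k : ℝ) / m) - C ≤ ((∑ j ∈ Finset.Ioc m k, X j ω : ℕ) : ℝ) ∧
          0.99 * Real.log ((k : ℝ) / m) - C ≤ ((∑ j ∈ Finset.Ioc m k, Y j ω : ℕ) : ℝ) ∧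
          0.99 * Real.log ((k : ℝ) / m) - C ≤ ((∑ j ∈ Finset.Ioc m k, Z j ω : ℕ) : ℝ)} := by
  have hseq : ∀ r : Fin 3, IsPoissonSeq μ (![X, Y, Z] r) := fun r =>
    { measurable := fun j => by fin_cases r <;> simp [hmeas j]
      indep := hindep.precomp (g := fun j => (r, j)) fun _ _ h => (Prod.mk.inj h).2
      law := fun j hj n => by fin_cases r <;> simp [hpois j hj n] }
  have hev := fun r => (hseq r).eventually_measure_biUnion_shortfallSet_le (c := 0.99)
    (by norm_num) (by norm_num) (ε := ε / 3) (by positivity)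
  obtain ⟨C, hC, hCpos⟩ := ((eventually_all.2 hev).and (eventually_gt_atTop 0)).exists
  refine ⟨C, hCpos, fun k _ => ofReal_one_sub_le_measure hε.le ?_⟩
  calc _ ≤ μ (⋃ r : Fin 3, ⋃ m ∈ Icc 1 k, shortfallSet (![X, Y, Z] r) 0.99 C m k) := by
        refine measure_mono fun ω hω => ?_
        simp only [Set.mem_compl_iff, Set.mem_ofPred_eq, not_forall, not_and_or, not_le] at hω
        obtain ⟨m, hm, hmk, hω⟩ := hω
        have hmem (r : Fin 3) (h : ω ∈ shortfallSet (![X, Y, Z] r) 0.99 C m k) :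
            ω ∈ ⋃ r : Fin 3, ⋃ m ∈ Icc 1 k, shortfallSet (![X, Y, Z] r) 0.99 C m k :=
          Set.mem_iUnion.2 ⟨r, Set.mem_iUnion₂.2 ⟨m, mem_Icc.2 ⟨hm, hmk⟩, h⟩⟩
        rcases hω with h | h | h
        exacts [hmem 0 h, hmem 1 h, hmem 2 h]
    _ ≤ ENNReal.ofReal ε := measure_iUnion_le_ofReal hε.le fun r => by simpa using hC r k

/-- For fixed `0 < ε < 1/2` there is `C = C(ε)` such that for all `k ≥ 1`, with
probability at least `1 − ε` one has `∑_{m<j≤k} X_j ≥ 0.99 log(k/m) − C` for all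
`1 ≤ m ≤ k`, simultaneously for `X`, `Y` and `Z`. -/
theorem three_sequences_lower_bound {Ω : Type*} [MeasurableSpace Ω]
    (μ : Measure Ω) [IsProbabilityMeasure μ] (X Y Z : ℕ → Ω → ℕ)
    (hmeas : ∀ j, Measurable (X j) ∧ Measurable (Y j) ∧ Measurable (Z j))
    (hindep : iIndepFun
      (fun p : Fin 3 × {j : ℕ // 1 ≤ j} => ![X, Y, Z] p.1 p.2.1) μ)
    (hpois : ∀ j : ℕ, 1 ≤ j → ∀ m : ℕ,
      μ {ω | X j ω = m} = poissonProb (1 / (j : ℝ)) m ∧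
      μ {ω | Y j ω = m} = poissonProb (1 / (j : ℝ)) m ∧
      μ {ω | Z j ω = m} = poissonProb (1 / (j : ℝ)) m)
    (ε : ℝ) (hε : 0 < ε) (hε' : ε < 1 / 2) :
    ∃ C : ℝ, 0 < C ∧ ∀ k : ℕ, 1 ≤ k →
      ENNReal.ofReal (1 - ε) ≤
        μ {ω | ∀ m : ℕ, 1 ≤ m → m ≤ k →
          0.99 * Real.log ((k : ℝ) / m) - C ≤ ((∑ j ∈ Finset.Ioc m k, X j ω : ℕ) : ℝ) ∧
          0.99 * Real.log ((k : ℝ) / m) - C ≤ ((∑ j ∈ Finset.Ioc m k, Y j ω : ℕ) : ℝ) ∧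
          0.99 * Real.log ((k : ℝ) / m) - C ≤ ((∑ j ∈ Finset.Ioc m k, Z j ω : ℕ) : ℝ)} :=
  three_sequences_lower_bound_general μ X Y Z hmeas hindep hpois ε hε
end

section
/- There is a constant C > 0 such that for every integer m ≥ 1 and every real number θ whose distance ‖θ‖ to the nearest integer is positive, one has |∑_{j=1}^{m} cos(2πjθ)/j − log min(1/‖θ‖, m)| ≤ C. -/
/-!
With `δ = ‖θ‖ ∈ (0, 1/2]`, the summand is `cos (2πjδ) / j`. For `j ≤ N ≤ 1/δ` the cosine is
`1 + O((jδ)²)`, so the sum up to `N` is the harmonic number `H_N = log N + O(1)`. Past `1/δ`, the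
partial sums of `cos (2πjδ)` are geometric sums bounded by `1 / sin (πδ) ≤ 1 / (2δ)`, and Abel
summation against the decreasing weights `1/j` makes the tail `O(1)`.
-/

open Finset

/-- `‖x‖`: the distance from `x` to the nearest integer. -/
noncomputable def distInt (x : ℝ) : ℝ := |x - round x|

open Real

theorem abs_harmonic_sub_log_le_one (n : ℕ) : |(harmonic n : ℝ) - log n| ≤ 1 := by
  have hlo := log_add_one_le_harmonic n
  push_cast at hlo
  have hup := harmonic_le_one_add_log n
  have hmono : log n ≤ log (n + 1) := by
    rcases n.eq_zero_or_pos with rfl | hn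
    · simp
    · exact log_le_log (by positivity) (by linarith)
  rw [abs_le]; constructor <;> linarith

theorem abs_cos_sub_one_le (x : ℝ) : |cos x - 1| ≤ x ^ 2 / 2 := by
  rw [abs_sub_comm, abs_of_nonneg (sub_nonneg.mpr (cos_le_one x))]
  linarith [one_sub_sq_div_two_le_cos (x := x)]

theorem abs_sum_Icc_cos_mul_div_sub_log_le (x : ℝ) (N : ℕ) :
    |∑ j ∈ Icc 1 N, cos (j * x) / j - log N| ≤ (N * x) ^ 2 / 2 + 1 := by
  have hsplit : ∑ j ∈ Icc 1 N, cos (j * x) / j - log N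
      = ∑ j ∈ Icc 1 N, (cos (j * x) - 1) / j + ((harmonic N : ℝ) - log N) := by
    simp only [harmonic_eq_sum_Icc, Rat.cast_sum, Rat.cast_inv, Rat.cast_natCast, sub_div,
      sum_sub_distrib, one_div]
    ring
  have hterm : ∀ j ∈ Icc 1 N, |(cos (j * x) - 1) / j| ≤ N * x ^ 2 / 2 := by
    intro j hj
    obtain ⟨hj1, hjN⟩ := mem_Icc.mp hj
    have hj : (0 : ℝ) < j := by exact_mod_cast hj1
    have hjN : (j : ℝ) ≤ N := by exact_mod_cast hjN
    rw [abs_div, abs_of_pos hj, div_le_iff₀ hj]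
    calc |cos (j * x) - 1| ≤ (j * x) ^ 2 / 2 := abs_cos_sub_one_le _
      _ = j * x ^ 2 / 2 * j := by ring
      _ ≤ N * x ^ 2 / 2 * j := by gcongr
  calc |∑ j ∈ Icc 1 N, cos (j * x) / j - log N|
      ≤ |∑ j ∈ Icc 1 N, (cos (j * x) - 1) / j| + |(harmonic N : ℝ) - log N| := by
        rw [hsplit]; exact abs_add_le _ _
    _ ≤ ∑ j ∈ Icc 1 N, N * x ^ 2 / 2 + 1 :=
        add_le_add ((abs_sum_le_sum_abs _ _).trans (sum_le_sum hterm))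
          (abs_harmonic_sub_log_le_one N)
    _ = (N * x) ^ 2 / 2 + 1 := by rw [sum_const, Nat.card_Icc, nsmul_eq_mul]; push_cast; ring

theorem abs_sum_range_cos_mul_mul_abs_sin_le (x : ℝ) (n : ℕ) :
    |∑ i ∈ range n, cos (i * x)| * |sin (x / 2)| ≤ 1 := by
  set z := Complex.exp (x * Complex.I)
  have hre : ∑ i ∈ range n, cos (i * x) = (∑ i ∈ range n, z ^ i).re := by
    simp only [Complex.re_sum, z, ← Complex.exp_nat_mul, ← mul_assoc]
    exact sum_congr rfl fun i _ => by
      rw [← Complex.exp_ofReal_mul_I_re]; push_cast; rfl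
  have hz : ‖z - 1‖ = 2 * |sin (x / 2)| := by
    rw [show z = Complex.exp (Complex.I * x) by rw [mul_comm],
      Complex.norm_exp_I_mul_ofReal_sub_one, norm_mul, Real.norm_eq_abs]
    norm_num
  have hzn : ‖z ^ n - 1‖ ≤ 2 := by
    calc ‖z ^ n - 1‖ ≤ ‖z ^ n‖ + ‖(1 : ℂ)‖ := norm_sub_le _ _
      _ = 2 := by
        rw [norm_pow, Complex.norm_exp_ofReal_mul_I, one_pow, norm_one]; norm_num
  have hre_le := Complex.abs_re_le_norm (∑ i ∈ range n, z ^ i)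
  calc |∑ i ∈ range n, cos (i * x)| * |sin (x / 2)|
      ≤ ‖∑ i ∈ range n, z ^ i‖ * |sin (x / 2)| := by rw [hre]; gcongr
    _ = ‖z ^ n - 1‖ / 2 := by rw [← geom_sum_mul, norm_mul, hz]; ring
    _ ≤ 1 := by linarith

theorem norm_sum_Ico_smul_le_of_antitoneOn {E : Type*} [SeminormedAddCommGroup E]
    [NormedSpace ℝ E] {f : ℕ → ℝ} {g : ℕ → E} {B : ℝ} {a : ℕ}
    (hf : AntitoneOn f (Set.Ici a)) (hf₀ : ∀ n, a ≤ n → 0 ≤ f n)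
    (hg : ∀ n, ‖∑ i ∈ range n, g i‖ ≤ B) (b : ℕ) :
    ‖∑ i ∈ Ico a b, f i • g i‖ ≤ 2 * B * f a := by
  have hB : 0 ≤ B := by simpa using hg 0
  have hfirst : 0 ≤ f a := hf₀ a le_rfl
  rcases le_or_gt b a with hba | hab
  · rw [Ico_eq_empty_of_le hba, sum_empty, norm_zero]
    positivity
  have hstep : ∀ i ∈ Ico a (b - 1), ‖(f (i + 1) - f i) • ∑ j ∈ range (i + 1), g j‖
      ≤ (f i - f (i + 1)) * B := by
    intro i hi
    have hai : a ≤ i := (mem_Ico.mp hi).1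
    have hmono : f (i + 1) ≤ f i :=
      hf (Set.mem_Ici.mpr hai) (Set.mem_Ici.mpr (hai.trans i.le_succ)) i.le_succ
    rw [norm_smul, Real.norm_eq_abs, abs_sub_comm, abs_of_nonneg (sub_nonneg.mpr hmono)]
    exact mul_le_mul_of_nonneg_left (hg _) (sub_nonneg.mpr hmono)
  have htele : ∑ i ∈ Ico a (b - 1), (f i - f (i + 1)) * B = (f a - f (b - 1)) * B := by
    rw [← sum_mul, ← neg_sub (f (b - 1)), ← sum_Ico_sub f (by omega), ← sum_neg_distrib]
    simp only [neg_sub]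
  have hlast : 0 ≤ f (b - 1) := hf₀ _ (by omega)
  rw [sum_Ico_by_parts f g hab]
  calc _ ≤ ‖f (b - 1) • ∑ i ∈ range b, g i‖ + ‖f a • ∑ i ∈ range a, g i‖
        + ‖∑ i ∈ Ico a (b - 1), (f (i + 1) - f i) • ∑ j ∈ range (i + 1), g j‖ :=
        norm_sub_le_of_le (norm_sub_le _ _) le_rfl
    _ ≤ f (b - 1) * B + f a * B + (f a - f (b - 1)) * B := by
        gcongr
        · rw [norm_smul, Real.norm_eq_abs, abs_of_nonneg hlast]; gcongr; exact hg b
        · rw [norm_smul, Real.norm_eq_abs, abs_of_nonneg hfirst]; gcongr; exact hg a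
        · exact htele ▸ (norm_sum_le _ _).trans (sum_le_sum hstep)
    _ = 2 * B * f a := by ring

theorem abs_sum_Ioc_cos_mul_div_le {x : ℝ} (hx : sin (x / 2) ≠ 0) (a b : ℕ) :
    |∑ j ∈ Ioc a b, cos (j * x) / j| ≤ 2 / ((a + 1) * |sin (x / 2)|) := by
  have hs : 0 < |sin (x / 2)| := abs_pos.mpr hx
  have hpartial : ∀ n, ‖∑ i ∈ range n, cos (i * x)‖ ≤ 1 / |sin (x / 2)| := fun n => by
    rw [Real.norm_eq_abs, le_div_iff₀ hs]; exact abs_sum_range_cos_mul_mul_abs_sin_le x n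
  have hanti : AntitoneOn (fun j : ℕ => (j : ℝ)⁻¹) (Set.Ici (a + 1)) := fun i hi j _ hij =>
    inv_anti₀ (Nat.cast_pos.mpr (by simp at hi; omega)) (by exact_mod_cast hij)
  have h := norm_sum_Ico_smul_le_of_antitoneOn hanti (fun n _ => by positivity) hpartial (b + 1)
  rw [Ico_add_one_add_one_eq_Ioc, Real.norm_eq_abs] at h
  simp only [smul_eq_mul, inv_mul_eq_div] at h
  refine h.trans (le_of_eq ?_)
  push_cast
  field_simp

theorem two_mul_le_sin_pi_mul {δ : ℝ} (h₀ : 0 ≤ δ) (h₁ : δ ≤ 1 / 2) : 2 * δ ≤ sin (π * δ) := by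
  have h := mul_le_sin (x := π * δ) (by positivity) (by nlinarith [pi_pos])
  rwa [← mul_assoc, div_mul_cancel₀ _ pi_ne_zero] at h

theorem abs_sum_Ioc_natFloor_cos_two_pi_mul_div_le_one {δ : ℝ} (h₀ : 0 < δ) (h₁ : δ ≤ 1 / 2)
    (m : ℕ) : |∑ j ∈ Ioc ⌊1 / δ⌋₊ m, cos (j * (2 * π * δ)) / j| ≤ 1 := by
  have hsin : 2 * δ ≤ sin (2 * π * δ / 2) := by
    rw [mul_div_right_comm, mul_div_cancel_left₀ _ two_ne_zero]
    exact two_mul_le_sin_pi_mul h₀.le h₁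
  refine (abs_sum_Ioc_cos_mul_div_le (by linarith) _ m).trans ?_
  rw [abs_of_pos (by linarith), div_le_one (mul_pos (by positivity) (by linarith))]
  nlinarith [Nat.lt_floor_add_one (1 / δ), mul_div_cancel₀ 1 h₀.ne']

theorem abs_log_sub_log_natFloor_le_one {y : ℝ} (hy : 1 ≤ y) : |log y - log ⌊y⌋₊| ≤ 1 := by
  have hM : (1 : ℝ) ≤ ⌊y⌋₊ := by exact_mod_cast Nat.one_le_floor_iff y |>.mpr hy
  have hMy : (⌊y⌋₊ : ℝ) ≤ y := Nat.floor_le (by linarith)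
  have hyM : y < ⌊y⌋₊ + 1 := Nat.lt_floor_add_one y
  have hpos : (0 : ℝ) < ⌊y⌋₊ := by linarith
  have hquot : y / ⌊y⌋₊ - 1 ≤ 1 := by
    rw [div_sub_one hpos.ne', div_le_one hpos]; linarith
  rw [← log_div (by linarith) hpos.ne', abs_of_nonneg (log_nonneg ((one_le_div hpos).mpr hMy))]
  exact (log_le_sub_one_of_pos (by positivity)).trans hquot

theorem cos_two_pi_mul_natCast_mul_distInt (j : ℕ) (θ : ℝ) :
    cos (j * (2 * π * distInt θ)) = cos (2 * π * j * θ) := by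
  rw [distInt, ← mul_assoc, ← abs_of_nonneg (by positivity : (0 : ℝ) ≤ j * (2 * π)), ← abs_mul,
    cos_abs, ← cos_sub_int_mul_two_pi (2 * π * j * θ) (j * round θ)]
  push_cast; ring_nf

/-- `∑_{j≤m} cos(2πjθ)/j = log min(1/‖θ‖, m) + O(1)` for `‖θ‖ > 0`. -/
theorem cosine_sum_estimate :
    ∃ C : ℝ, 0 < C ∧ ∀ m : ℕ, 1 ≤ m → ∀ θ : ℝ, 0 < distInt θ →
      |(∑ j ∈ Finset.Icc 1 m, Real.cos (2 * Real.pi * j * θ) / j) -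
        Real.log (min (1 / distInt θ) (m : ℝ))| ≤ C := by
  refine ⟨2 * π ^ 2 + 3, by positivity, fun m _ θ hδ => ?_⟩
  simp_rw [← cos_two_pi_mul_natCast_mul_distInt]
  set δ := distInt θ
  have hδ₁ : δ ≤ 1 / 2 := abs_sub_round θ
  have head (N : ℕ) (hN : N * δ ≤ 1) :
      |∑ j ∈ Icc 1 N, cos (j * (2 * π * δ)) / j - log N| ≤ 2 * π ^ 2 + 1 := by
    refine (abs_sum_Icc_cos_mul_div_sub_log_le _ N).trans ?_
    have : (N * δ) ^ 2 ≤ 1 := pow_le_one₀ (by positivity) hN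
    nlinarith [pi_pos]
  rcases le_or_gt (m : ℝ) (1 / δ) with hmδ | hδm
  · rw [min_eq_right hmδ]
    linarith [head m ((le_div_iff₀ hδ).mp hmδ)]
  set M := ⌊1 / δ⌋₊
  have hMm : M ≤ m := by exact_mod_cast (Nat.floor_le (one_div_pos.mpr hδ).le).trans hδm.le
  have htail := abs_sum_Ioc_natFloor_cos_two_pi_mul_div_le_one hδ hδ₁ m
  have hlog := abs_log_sub_log_natFloor_le_one (one_le_one_div hδ (by linarith))
  have hsplit := sum_Ioc_consecutive (fun j : ℕ => cos (j * (2 * π * δ)) / j) (Nat.zero_le M) hMm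
  rw [← Icc_add_one_left_eq_Ioc 0 M, ← Icc_add_one_left_eq_Ioc 0 m, zero_add] at hsplit
  rw [min_eq_left hδm.le, ← hsplit]
  calc _ = |(∑ j ∈ Icc 1 M, cos (j * (2 * π * δ)) / j - log M)
        + ∑ j ∈ Ioc M m, cos (j * (2 * π * δ)) / j - (log (1 / δ) - log M)| := by congr 1; ring
    _ ≤ _ := (abs_sub _ _).trans (add_le_add_left (abs_add_le _ _) _)
    _ ≤ 2 * π ^ 2 + 3 := by
      linarith [head M ((le_div_iff₀ hδ).mp (Nat.floor_le (one_div_pos.mpr hδ).le))]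
end
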